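/- arXiv:2507.00384 — 5 statements merged into one kernel-verified Lean document; each statement's English description precedes it below -/
import Mathlib

section
/- Let L be a finite-dimensional Lie algebra over ℂ with Killing radical K, equipped with a ℤ-grading (L_i)_{i∈ℤ}, and let W be a ℂ-subspace of L_0 such that L_0 is the internal direct sum W ⊕ (K ∩ L_0). Then the restriction of the Killing form to W is non-degenerate: if x ∈ W satisfies κ(x,y) = 0 for all y ∈ W, then x = 0. -/
/-- The Killing radical of a Lie algebra over ℂ: the kernel of the Killing form,
`K = {x ∈ L | κ(x,y) = 0 for all y ∈ L}`. -/
def killingRad (L : Type*) [LieRing L] [LieAlgebra ℂ L] : Submodule ℂ L where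
  carrier := {x : L | ∀ y : L, killingForm ℂ L x y = 0}
  add_mem' := by
    intro a b ha hb y
    rw [map_add, LinearMap.add_apply, ha y, hb y, add_zero]
  zero_mem' := by
    intro y
    rw [map_zero, LinearMap.zero_apply]
  smul_mem' := by
    intro c a ha y
    rw [map_smul, LinearMap.smul_apply, ha y, smul_zero]

/-!
Because `ad x ∘ ad y` shifts degrees by `i + j` when `x ∈ L_i` and `y ∈ L_j`, its trace vanishes
unless `i + j = 0`; so an element of `L_0` that is Killing-orthogonal to `L_0` is orthogonal to all
of `L`, i.e. lies in `K`. An `x ∈ W` orthogonal to `W` is also orthogonal to `K ∩ L_0`, hence to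
`L_0 = W ⊕ (K ∩ L_0)`, hence lies in `W ∩ (K ∩ L_0) = 0`.
-/

namespace LieAlgebra

variable {K L : Type*} [Field K] [LieRing L] [LieAlgebra K L] [FiniteDimensional K L]
  {Lg : ℤ → Submodule K L}

theorem killingForm_eq_zero_of_mem_of_add_ne_zero
    (hdecomp : DirectSum.IsInternal Lg)
    (hbracket : ∀ i j : ℤ, ∀ x ∈ Lg i, ∀ y ∈ Lg j, ⁅x, y⁆ ∈ Lg (i + j))
    {i j : ℤ} (hij : i + j ≠ 0) {x y : L} (hx : x ∈ Lg i) (hy : y ∈ Lg j) :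
    killingForm K L x y = 0 := by
  have hshift : ∀ k : ℤ, Set.MapsTo (ad K L x ∘ₗ ad K L y) (Lg k) (Lg (i + j + k)) := by
    intro k z hz
    rw [LinearMap.comp_apply, ad_apply, ad_apply, add_assoc]
    exact hbracket i (j + k) x hx _ (hbracket j k y hy z hz)
  exact LinearMap.trace_eq_zero_of_mapsTo_ne hdecomp (fun k => i + j + k)
    (fun k => by simpa using hij) hshift

theorem killingForm_eq_zero_of_forall_mem_zero
    (hdecomp : DirectSum.IsInternal Lg)
    (hbracket : ∀ i j : ℤ, ∀ x ∈ Lg i, ∀ y ∈ Lg j, ⁅x, y⁆ ∈ Lg (i + j))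
    {x : L} (hx : x ∈ Lg 0) (hx0 : ∀ y ∈ Lg 0, killingForm K L x y = 0) (y : L) :
    killingForm K L x y = 0 := by
  have hker : ∀ i : ℤ, Lg i ≤ LinearMap.ker (killingForm K L x) := by
    intro i z hz
    rcases eq_or_ne i 0 with rfl | hi
    · exact hx0 z hz
    · exact killingForm_eq_zero_of_mem_of_add_ne_zero hdecomp hbracket (by simpa using hi) hx hz
  have htop : (⊤ : Submodule K L) ≤ LinearMap.ker (killingForm K L x) :=
    hdecomp.submodule_iSup_eq_top ▸ iSup_le hker
  exact htop Submodule.mem_top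

end LieAlgebra

theorem statement9_general (L : Type*) [LieRing L] [LieAlgebra ℂ L] [FiniteDimensional ℂ L]
    (Lg : ℤ → Submodule ℂ L)
    (hdecomp : DirectSum.IsInternal Lg)
    (hbracket : ∀ i j : ℤ, ∀ x ∈ Lg i, ∀ y ∈ Lg j, ⁅x, y⁆ ∈ Lg (i + j))
    (W : Submodule ℂ L)
    (hsum : W ⊔ (killingRad L ⊓ Lg 0) = Lg 0)
    (hdisj : Disjoint W (killingRad L ⊓ Lg 0)) :
    ∀ x ∈ W, (∀ y ∈ W, killingForm ℂ L x y = 0) → x = 0 := by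
  intro x hx hxW
  have hW : W ≤ Lg 0 := hsum ▸ le_sup_left
  have hxL0 : ∀ y ∈ Lg 0, killingForm ℂ L x y = 0 := by
    intro y hy
    rw [← hsum] at hy
    obtain ⟨w, hw, k, hk, rfl⟩ := Submodule.mem_sup.mp hy
    rw [map_add, hxW w hw, LieModule.traceForm_comm, hk.1 x, add_zero]
  have hxK : x ∈ killingRad L :=
    LieAlgebra.killingForm_eq_zero_of_forall_mem_zero hdecomp hbracket (hW hx) hxL0
  exact Submodule.disjoint_def.mp hdisj x hx ⟨hxK, hW hx⟩

/-- If `L_0 = W ⊕ (K ∩ L_0)` (internal direct sum) in a ℤ-graded finite-dimensional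
complex Lie algebra, then the Killing form restricted to `W` is non-degenerate. -/
theorem statement9 (L : Type*) [LieRing L] [LieAlgebra ℂ L] [FiniteDimensional ℂ L]
    (Lg : ℤ → Submodule ℂ L)
    (hfin : {i : ℤ | Lg i ≠ ⊥}.Finite)
    (hdecomp : DirectSum.IsInternal Lg)
    (hbracket : ∀ i j : ℤ, ∀ x ∈ Lg i, ∀ y ∈ Lg j, ⁅x, y⁆ ∈ Lg (i + j))
    (W : Submodule ℂ L) (hW : W ≤ Lg 0)
    (hsum : W ⊔ (killingRad L ⊓ Lg 0) = Lg 0)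
    (hdisj : Disjoint W (killingRad L ⊓ Lg 0)) :
    ∀ x ∈ W, (∀ y ∈ W, killingForm ℂ L x y = 0) → x = 0 :=
  statement9_general L Lg hdecomp hbracket W hsum hdisj
end

section
/- Let L be a finite-dimensional Lie algebra over ℂ equipped with a ℤ-grading (L_i)_{i∈ℤ} admitting a level operator d ∈ L_0 (so ⁅d,x⁆ = i·x for all x ∈ L_i and all i). Suppose 𝔤₀ is a Lie subalgebra of L_0 and 𝔨₀ a subspace of L_0 with L_0 = 𝔤₀ ⊕ 𝔨₀ (internal direct sum) and ⁅𝔤₀, 𝔨₀⁆ ⊆ 𝔨₀. Set 𝒞 := {c ∈ 𝔨₀ | ⁅c, x⁆ = 0 for all x ∈ 𝔤₀}, and assume that every element c ∈ 𝒞 with ⁅c, 𝒞⁆ = 0 lies in the centre Z(L). Then d = d₀ + z for some d₀ ∈ 𝔤₀ with ⁅d₀, 𝔤₀⁆ = 0 and some z ∈ Z(L). -/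
/-!
Since `d` has degree `0`, it centralizes `L₀`. Split `d = d₀ + z` along `L₀ = 𝔤₀ ⊕ 𝔨₀`. For
`g ∈ 𝔤₀` the brackets `⁅d₀, g⁆ ∈ 𝔤₀` and `⁅z, g⁆ ∈ 𝔨₀` add up to `0`, so both vanish: `d₀` is
central in `𝔤₀` and `z ∈ 𝒞`. For `c ∈ 𝒞` also `⁅d₀, c⁆ = 0`, hence `⁅z, c⁆ = ⁅d, c⁆ = 0`, and the
hypothesis on `𝒞` puts `z` in the centre of `L`.
-/

section Complement

variable {R L : Type*} [CommRing R] [LieRing L] [LieAlgebra R L]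
  {g₀ : LieSubalgebra R L} {k₀ : Submodule R L}

theorem lie_eq_zero_of_add_lie_eq_zero (hdisj : Disjoint g₀.toSubmodule k₀)
    (hgk : ∀ g ∈ g₀, ∀ y ∈ k₀, ⁅g, y⁆ ∈ k₀) {a b x : L} (ha : a ∈ g₀) (hb : b ∈ k₀)
    (hx : x ∈ g₀) (h : ⁅a + b, x⁆ = 0) : ⁅a, x⁆ = 0 ∧ ⁅b, x⁆ = 0 := by
  rw [add_lie, add_eq_zero_iff_eq_neg] at h
  have hk : ⁅a, x⁆ ∈ k₀ := by
    rw [h, lie_skew]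
    exact hgk x hx b hb
  have ha0 : ⁅a, x⁆ = 0 := (Submodule.disjoint_def.mp hdisj) _ (g₀.lie_mem ha hx) hk
  exact ⟨ha0, neg_eq_zero.mp (ha0 ▸ h).symm⟩

end Complement

theorem statement10_general (L : Type*) [LieRing L] [LieAlgebra ℂ L]
    (Lg : ℤ → Submodule ℂ L)
    (d : L) (hd0 : d ∈ Lg 0) (hd : ∀ i : ℤ, ∀ x ∈ Lg i, ⁅d, x⁆ = (i : ℂ) • x)
    (g0 : LieSubalgebra ℂ L) (k0 : Submodule ℂ L)
    (hg0 : g0.toSubmodule ≤ Lg 0) (hk0 : k0 ≤ Lg 0)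
    (hsum : g0.toSubmodule ⊔ k0 = Lg 0)
    (hdisj : Disjoint g0.toSubmodule k0)
    (hgk : ∀ g ∈ g0, ∀ y ∈ k0, ⁅g, y⁆ ∈ k0)
    (hC : ∀ c ∈ k0, (∀ x ∈ g0, ⁅c, x⁆ = 0) →
      (∀ c' ∈ k0, (∀ x ∈ g0, ⁅c', x⁆ = 0) → ⁅c, c'⁆ = 0) →
      c ∈ LieAlgebra.center ℂ L) :
    ∃ d₀ z : L, d₀ ∈ g0 ∧ (∀ g ∈ g0, ⁅d₀, g⁆ = 0) ∧
      z ∈ LieAlgebra.center ℂ L ∧ d = d₀ + z := by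
  obtain ⟨d₀, hd₀, z, hz, rfl⟩ := Submodule.mem_sup.mp (hsum ▸ hd0)
  have hcentralizes : ∀ x ∈ Lg 0, ⁅d₀ + z, x⁆ = 0 := fun x hx => by simpa using hd 0 x hx
  have hsplit : ∀ g ∈ g0, ⁅d₀, g⁆ = 0 ∧ ⁅z, g⁆ = 0 := fun g hg =>
    lie_eq_zero_of_add_lie_eq_zero hdisj hgk hd₀ hz hg (hcentralizes g (hg0 hg))
  have hzC : ∀ c ∈ k0, (∀ x ∈ g0, ⁅c, x⁆ = 0) → ⁅z, c⁆ = 0 := by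
    intro c hc hcg
    have hd₀c : ⁅d₀, c⁆ = 0 := by rw [← lie_skew, hcg d₀ hd₀, neg_zero]
    simpa [add_lie, hd₀c] using hcentralizes c (hk0 hc)
  exact ⟨d₀, z, hd₀, fun g hg => (hsplit g hg).1,
    hC z hz (fun g hg => (hsplit g hg).2) hzC, rfl⟩

/-- For a normal-type ℤ-graded Lie algebra, the level operator decomposes as
`d = d₀ + z` with `d₀ ∈ Z(𝔤₀)` and `z ∈ Z(L)`. -/
theorem statement10 (L : Type*) [LieRing L] [LieAlgebra ℂ L] [FiniteDimensional ℂ L]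
    (Lg : ℤ → Submodule ℂ L)
    (hfin : {i : ℤ | Lg i ≠ ⊥}.Finite)
    (hdecomp : DirectSum.IsInternal Lg)
    (hbracket : ∀ i j : ℤ, ∀ x ∈ Lg i, ∀ y ∈ Lg j, ⁅x, y⁆ ∈ Lg (i + j))
    (d : L) (hd0 : d ∈ Lg 0) (hd : ∀ i : ℤ, ∀ x ∈ Lg i, ⁅d, x⁆ = (i : ℂ) • x)
    (g0 : LieSubalgebra ℂ L) (k0 : Submodule ℂ L)
    (hg0 : g0.toSubmodule ≤ Lg 0) (hk0 : k0 ≤ Lg 0)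
    (hsum : g0.toSubmodule ⊔ k0 = Lg 0)
    (hdisj : Disjoint g0.toSubmodule k0)
    (hgk : ∀ g ∈ g0, ∀ y ∈ k0, ⁅g, y⁆ ∈ k0)
    (hC : ∀ c ∈ k0, (∀ x ∈ g0, ⁅c, x⁆ = 0) →
      (∀ c' ∈ k0, (∀ x ∈ g0, ⁅c', x⁆ = 0) → ⁅c, c'⁆ = 0) →
      c ∈ LieAlgebra.center ℂ L) :
    ∃ d₀ z : L, d₀ ∈ g0 ∧ (∀ g ∈ g0, ⁅d₀, g⁆ = 0) ∧
      z ∈ LieAlgebra.center ℂ L ∧ d = d₀ + z :=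
  statement10_general L Lg d hd0 hd g0 k0 hg0 hk0 hsum hdisj hgk hC
end

section
/- Let L be a finite-dimensional Lie algebra over ℂ with Killing radical K, and let L_s be a Lie subalgebra of L such that L = L_s ⊕ K (internal direct sum of subspaces). Let C_L(L_s) := {x ∈ L | ⁅x, w⁆ = 0 for all w ∈ L_s}, N_L(L_s) := {x ∈ L | ⁅x, L_s⁆ ⊆ L_s}, and Z(L_s) := {w ∈ L_s | ⁅w, L_s⁆ = 0}. Then: (i) C_L(L_s) = Z(L_s) ⊕ (C_L(L_s) ∩ K) (internal direct sum); (ii) N_L(L_s) = L_s ⊕ (C_L(L_s) ∩ K) (internal direct sum). -/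
/-- The centraliser of a subset `s` of a Lie algebra, as a subspace:
`{x | ⁅x, a⁆ = 0 for all a ∈ s}`. -/
def centralizerSub {L : Type*} [LieRing L] [LieAlgebra ℂ L] (s : Set L) : Submodule ℂ L where
  carrier := {x : L | ∀ a ∈ s, ⁅x, a⁆ = 0}
  add_mem' := by
    intro u v hu hv a ha
    rw [add_lie, hu a ha, hv a ha, add_zero]
  zero_mem' := by
    intro a ha
    rw [zero_lie]
  smul_mem' := by
    intro c u hu a ha
    rw [smul_lie, hu a ha, smul_zero]

/-- The normaliser of a subspace `T` of a Lie algebra, as a subspace: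
`{x | ⁅x, T⁆ ⊆ T}`. -/
def normalizerSub {L : Type*} [LieRing L] [LieAlgebra ℂ L] (T : Submodule ℂ L) :
    Submodule ℂ L where
  carrier := {x : L | ∀ a ∈ T, ⁅x, a⁆ ∈ T}
  add_mem' := by
    intro u v hu hv a ha
    rw [add_lie]
    exact T.add_mem (hu a ha) (hv a ha)
  zero_mem' := by
    intro a ha
    rw [zero_lie]
    exact T.zero_mem
  smul_mem' := by
    intro c u hu a ha
    rw [smul_lie]
    exact T.smul_mem c (hu a ha)

/-!
Invariance of the Killing form makes `K` an ideal, and `K ∩ L_s = 0`; hence an element of `K`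
normalising `L_s` centralises it, i.e. `N ∩ K = C ∩ K`. Since `L_s ≤ N` and `L = L_s ⊕ K`, the
modular law gives `N = L_s ⊔ (N ∩ K)`, which is (ii). As `C ≤ N`, the modular law applied once
more to `C ≤ L_s ⊔ (C ∩ K)` gives (i).
-/

section

variable {L : Type*} [LieRing L] [LieAlgebra ℂ L]

lemma lie_mem_killingRad {x : L} (hx : x ∈ killingRad L) (y : L) : ⁅x, y⁆ ∈ killingRad L :=
  fun z => by
    rw [LieModule.traceForm_apply_lie_apply]
    exact hx ⁅y, z⁆

lemma centralizerSub_le_normalizerSub (T : Submodule ℂ L) :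
    centralizerSub (T : Set L) ≤ normalizerSub T := fun x hx a ha => by
  rw [hx a ha]
  exact T.zero_mem

lemma LieSubalgebra.toSubmodule_le_normalizerSub (S : LieSubalgebra ℂ L) :
    S.toSubmodule ≤ normalizerSub S.toSubmodule := fun _ hx _ ha => S.lie_mem hx ha

lemma normalizerSub_inf_eq_centralizerSub_inf {T I : Submodule ℂ L}
    (hI : ∀ k ∈ I, ∀ y : L, ⁅k, y⁆ ∈ I) (hTI : Disjoint T I) :
    normalizerSub T ⊓ I = centralizerSub (T : Set L) ⊓ I := by
  refine le_antisymm (fun k ⟨hkN, hkI⟩ => ⟨fun a ha => ?_, hkI⟩)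
    (inf_le_inf_right I (centralizerSub_le_normalizerSub T))
  exact (Submodule.disjoint_def.mp hTI) _ (hkN a ha) (hI k hkI a)

end

theorem statement12_general (L : Type*) [LieRing L] [LieAlgebra ℂ L]
    (Ls : LieSubalgebra ℂ L)
    (hcompl : IsCompl Ls.toSubmodule (killingRad L)) :
    (centralizerSub (Ls : Set L)
        = (Ls.toSubmodule ⊓ centralizerSub (Ls : Set L))
          ⊔ (centralizerSub (Ls : Set L) ⊓ killingRad L) ∧
      Disjoint (Ls.toSubmodule ⊓ centralizerSub (Ls : Set L))
        (centralizerSub (Ls : Set L) ⊓ killingRad L)) ∧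
    (normalizerSub Ls.toSubmodule
        = Ls.toSubmodule ⊔ (centralizerSub (Ls : Set L) ⊓ killingRad L) ∧
      Disjoint Ls.toSubmodule (centralizerSub (Ls : Set L) ⊓ killingRad L)) := by
  set S := Ls.toSubmodule
  set C := centralizerSub (Ls : Set L)
  set K := killingRad L
  have hCN : C ≤ normalizerSub S := centralizerSub_le_normalizerSub S
  have hN : normalizerSub S = S ⊔ C ⊓ K := by
    calc normalizerSub S = (S ⊔ K) ⊓ normalizerSub S := by rw [hcompl.sup_eq_top, top_inf_eq]
      _ = S ⊔ K ⊓ normalizerSub S := sup_inf_assoc_of_le K Ls.toSubmodule_le_normalizerSub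
      _ = S ⊔ C ⊓ K := by
        rw [inf_comm]
        exact congrArg (S ⊔ ·) <| normalizerSub_inf_eq_centralizerSub_inf
          (fun _ hk => lie_mem_killingRad hk) hcompl.disjoint
  have hC : C = S ⊓ C ⊔ C ⊓ K := by
    calc C = (C ⊓ K ⊔ S) ⊓ C := by rw [sup_comm, ← hN, inf_eq_right.mpr hCN]
      _ = C ⊓ K ⊔ S ⊓ C := sup_inf_assoc_of_le S inf_le_left
      _ = S ⊓ C ⊔ C ⊓ K := sup_comm _ _
  exact ⟨⟨hC, hcompl.disjoint.mono inf_le_left inf_le_right⟩,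
    ⟨hN, hcompl.disjoint.mono le_rfl inf_le_right⟩⟩

/-- With `L = L_s ⊕ K`, `L_s` a Lie subalgebra and `K` the Killing radical:
(i) `C_L(L_s) = Z(L_s) ⊕ (C_L(L_s) ∩ K)`; (ii) `N_L(L_s) = L_s ⊕ (C_L(L_s) ∩ K)`
(internal direct sums). -/
theorem statement12 (L : Type*) [LieRing L] [LieAlgebra ℂ L] [FiniteDimensional ℂ L]
    (Ls : LieSubalgebra ℂ L)
    (hcompl : IsCompl Ls.toSubmodule (killingRad L)) :
    (centralizerSub (Ls : Set L)
        = (Ls.toSubmodule ⊓ centralizerSub (Ls : Set L))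
          ⊔ (centralizerSub (Ls : Set L) ⊓ killingRad L) ∧
      Disjoint (Ls.toSubmodule ⊓ centralizerSub (Ls : Set L))
        (centralizerSub (Ls : Set L) ⊓ killingRad L)) ∧
    (normalizerSub Ls.toSubmodule
        = Ls.toSubmodule ⊔ (centralizerSub (Ls : Set L) ⊓ killingRad L) ∧
      Disjoint Ls.toSubmodule (centralizerSub (Ls : Set L) ⊓ killingRad L)) :=
  statement12_general L Ls hcompl
end

section
/- Let L be a finite-dimensional Lie algebra over ℂ with Killing radical K and centre Z(L), equipped with a ℤ-grading (L_i)_{i∈ℤ}. Fix i, j ∈ ℤ with i ≠ 0, j ≠ 0 and i + j ≠ 0, and assume: K ∩ L_{-i} = 0, K ∩ L_{-j} = 0, L_{i+j} ⊆ K, L_{-i-j} ⊆ K, and the reflexivity condition that any x ∈ L_{i+j} with ⁅x, L_{-i-j}⁆ = 0 is zero. Assume also ⁅L_{i+j}, L_{-i-j}⁆ ⊆ Z(L). Then ⁅L_i, L_{-i-j}⁆ = 0, ⁅L_j, L_{-i-j}⁆ = 0, and ⁅L_i, L_j⁆ = 0. -/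
/-!
The Killing radical is an ideal, by invariance of the Killing form. Hence bracketing
`L_i` or `L_j` with `L_{-i-j} ⊆ K` lands in `K ∩ L_{-j}` resp. `K ∩ L_{-i}`, which are zero.
For `x ∈ L_i`, `y ∈ L_j` the Jacobi identity then gives `⁅⁅x, y⁆, L_{-i-j}⁆ = 0`, so
`⁅x, y⁆ = 0` by reflexivity.
-/

theorem lie_mem_killingRad_s17 {L : Type*} [LieRing L] [LieAlgebra ℂ L] (x : L) {w : L}
    (hw : w ∈ killingRad L) : ⁅x, w⁆ ∈ killingRad L := fun y => by
  rw [LieModule.traceForm_apply_lie_apply', hw, neg_zero]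

theorem lie_eq_zero_of_killingRad_inf_eq_bot {L : Type*} [LieRing L] [LieAlgebra ℂ L]
    {Lg : ℤ → Submodule ℂ L} (hbracket : ∀ m n : ℤ, ∀ x ∈ Lg m, ∀ y ∈ Lg n, ⁅x, y⁆ ∈ Lg (m + n))
    {m n k : ℤ} (hk : m + n = k) (hK : killingRad L ⊓ Lg k = ⊥)
    {x w : L} (hx : x ∈ Lg m) (hw : w ∈ Lg n) (hwK : w ∈ killingRad L) : ⁅x, w⁆ = 0 := by
  have hmem : ⁅x, w⁆ ∈ killingRad L ⊓ Lg k :=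
    ⟨lie_mem_killingRad_s17 x hwK, hk ▸ hbracket m n x hx w hw⟩
  rwa [hK, Submodule.mem_bot] at hmem

theorem statement17_general (L : Type*) [LieRing L] [LieAlgebra ℂ L]
    (Lg : ℤ → Submodule ℂ L)
    (hbracket : ∀ m n : ℤ, ∀ x ∈ Lg m, ∀ y ∈ Lg n, ⁅x, y⁆ ∈ Lg (m + n))
    (i j : ℤ)
    (hKi : killingRad L ⊓ Lg (-i) = ⊥)
    (hKj : killingRad L ⊓ Lg (-j) = ⊥)
    (hij2 : Lg (-(i + j)) ≤ killingRad L)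
    (hrefl : ∀ x ∈ Lg (i + j), (∀ w ∈ Lg (-(i + j)), ⁅x, w⁆ = 0) → x = 0) :
    (∀ x ∈ Lg i, ∀ w ∈ Lg (-(i + j)), ⁅x, w⁆ = 0) ∧
    (∀ y ∈ Lg j, ∀ w ∈ Lg (-(i + j)), ⁅y, w⁆ = 0) ∧
    (∀ x ∈ Lg i, ∀ y ∈ Lg j, ⁅x, y⁆ = 0) := by
  have hi : ∀ x ∈ Lg i, ∀ w ∈ Lg (-(i + j)), ⁅x, w⁆ = 0 := fun x hx w hw =>
    lie_eq_zero_of_killingRad_inf_eq_bot hbracket (by ring) hKj hx hw (hij2 hw)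
  have hj : ∀ y ∈ Lg j, ∀ w ∈ Lg (-(i + j)), ⁅y, w⁆ = 0 := fun y hy w hw =>
    lie_eq_zero_of_killingRad_inf_eq_bot hbracket (by ring) hKi hy hw (hij2 hw)
  refine ⟨hi, hj, fun x hx y hy => hrefl _ (hbracket i j x hx y hy) fun w hw => ?_⟩
  rw [lie_lie, hi x hx w hw, hj y hy w hw, lie_zero, lie_zero, sub_zero]

/-- Let `i, j ≠ 0` with `i + j ≠ 0`, and suppose `L_{±i}` meet the Killing radical
trivially while `L_{±(i+j)} ⊆ K`, with reflexivity and `⁅L_{i+j}, L_{-i-j}⁆ ⊆ Z(L)`.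
Then `⁅L_i, L_{-i-j}⁆ = ⁅L_j, L_{-i-j}⁆ = ⁅L_i, L_j⁆ = 0`. -/
theorem statement17 (L : Type*) [LieRing L] [LieAlgebra ℂ L] [FiniteDimensional ℂ L]
    (Lg : ℤ → Submodule ℂ L)
    (hfin : {n : ℤ | Lg n ≠ ⊥}.Finite)
    (hdecomp : DirectSum.IsInternal Lg)
    (hbracket : ∀ m n : ℤ, ∀ x ∈ Lg m, ∀ y ∈ Lg n, ⁅x, y⁆ ∈ Lg (m + n))
    (i j : ℤ) (hi : i ≠ 0) (hj : j ≠ 0) (hij : i + j ≠ 0)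
    (hKi : killingRad L ⊓ Lg (-i) = ⊥)
    (hKj : killingRad L ⊓ Lg (-j) = ⊥)
    (hij1 : Lg (i + j) ≤ killingRad L)
    (hij2 : Lg (-(i + j)) ≤ killingRad L)
    (hrefl : ∀ x ∈ Lg (i + j), (∀ w ∈ Lg (-(i + j)), ⁅x, w⁆ = 0) → x = 0)
    (hZ : ∀ x ∈ Lg (i + j), ∀ w ∈ Lg (-(i + j)), ⁅x, w⁆ ∈ LieAlgebra.center ℂ L) :
    (∀ x ∈ Lg i, ∀ w ∈ Lg (-(i + j)), ⁅x, w⁆ = 0) ∧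
    (∀ y ∈ Lg j, ∀ w ∈ Lg (-(i + j)), ⁅y, w⁆ = 0) ∧
    (∀ x ∈ Lg i, ∀ y ∈ Lg j, ⁅x, y⁆ = 0) :=
  statement17_general L Lg hbracket i j hKi hKj hij2 hrefl
end

section
/- Let L be a finite-dimensional Lie algebra over ℂ equipped with a ℤ-grading (L_i)_{i∈ℤ}, and let M be a Lie module over L equipped with a compatible ℤ-grading: subspaces (M_j)_{j∈ℤ} with M the internal direct sum ⊕_j M_j, M_j = 0 for all j > 0, and x·v ∈ M_{i+j} for all x ∈ L_i, v ∈ M_j. Let M^p := {v ∈ M | x·v = 0 for all x ∈ L_i and all i > 0} be the primary component, and assume M is standard: the only Lie submodule of M containing M^p is M itself. Then M is an irreducible L-module (M ≠ 0 and its only Lie submodules are 0 and M) if and only if M^p is an irreducible L_0-module (M^p ≠ 0 and the only subspaces W ⊆ M^p with x·W ⊆ W for all x ∈ L_0 are 0 and M^p). -/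
open DirectSum

set_option maxHeartbeats 1000000
set_option synthInstance.maxHeartbeats 400000

namespace Statement19Aux

variable {L M : Type*} [LieRing L] [LieAlgebra ℂ L]
  [AddCommGroup M] [Module ℂ M] [LieRingModule L M] [LieModule ℂ L M]

/-- Elements obtained from a set `W` by repeatedly applying homogeneous elements of
nonpositive degree. -/
inductive IsWord (Lg : ℤ → Submodule ℂ L) (W : Set M) : M → Prop
  | base {w : M} : w ∈ W → IsWord Lg W w
  | step {i : ℤ} (hi : i ≤ 0) {x : L} (hx : x ∈ Lg i) {u : M} (hu : IsWord Lg W u) :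
      IsWord Lg W ⁅x, u⁆

/-- The span of all words. -/
def wordSpan (Lg : ℤ → Submodule ℂ L) (W : Set M) : Submodule ℂ M :=
  Submodule.span ℂ {v | IsWord Lg W v}

variable {Lg : ℤ → Submodule ℂ L} {W : Set M}

theorem word_mem {v : M} (h : IsWord Lg W v) : v ∈ wordSpan Lg W :=
  Submodule.subset_span h

theorem wordSpan_lie_nonpos {i : ℤ} (hi : i ≤ 0) {x : L} (hx : x ∈ Lg i)
    {v : M} (hv : v ∈ wordSpan Lg W) : ⁅x, v⁆ ∈ wordSpan Lg W := by
  induction hv using Submodule.span_induction with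
  | mem v hv => exact word_mem (IsWord.step hi hx hv)
  | zero => rw [lie_zero]; exact zero_mem _
  | add a b _ _ ha hb => rw [lie_add]; exact add_mem ha hb
  | smul c a _ ha => rw [lie_smul]; exact Submodule.smul_mem _ _ ha

theorem word_lie_pos
    (hLbracket : ∀ i j : ℤ, ∀ x ∈ Lg i, ∀ y ∈ Lg j, ⁅x, y⁆ ∈ Lg (i + j))
    (hWP : ∀ w ∈ W, ∀ i : ℤ, 0 < i → ∀ x ∈ Lg i, ⁅x, w⁆ = 0)
    {v : M} (hv : IsWord Lg W v) :
    ∀ i : ℤ, 0 < i → ∀ x ∈ Lg i, ⁅x, v⁆ ∈ wordSpan Lg W := by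
  induction hv with
  | base hw =>
    intro i hi x hx
    rw [hWP _ hw i hi x hx]; exact zero_mem _
  | @step d hd x₁ hx₁ u hu ih =>
    intro i hi x hx
    rw [leibniz_lie x x₁ u]
    refine add_mem ?_ (wordSpan_lie_nonpos hd hx₁ (ih i hi x hx))
    rcases le_or_gt (i + d) 0 with h | h
    · exact word_mem (IsWord.step h (hLbracket i d x hx x₁ hx₁) hu)
    · exact ih (i + d) h _ (hLbracket i d x hx x₁ hx₁)

theorem wordSpan_lie_pos
    (hLbracket : ∀ i j : ℤ, ∀ x ∈ Lg i, ∀ y ∈ Lg j, ⁅x, y⁆ ∈ Lg (i + j))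
    (hWP : ∀ w ∈ W, ∀ i : ℤ, 0 < i → ∀ x ∈ Lg i, ⁅x, w⁆ = 0)
    {i : ℤ} (hi : 0 < i) {x : L} (hx : x ∈ Lg i)
    {v : M} (hv : v ∈ wordSpan Lg W) : ⁅x, v⁆ ∈ wordSpan Lg W := by
  induction hv using Submodule.span_induction with
  | mem v hv => exact word_lie_pos hLbracket hWP hv i hi x hx
  | zero => rw [lie_zero]; exact zero_mem _
  | add a b _ _ ha hb => rw [lie_add]; exact add_mem ha hb
  | smul c a _ ha => rw [lie_smul]; exact Submodule.smul_mem _ _ ha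

theorem wordSpan_lie (hLtop : iSup Lg = ⊤)
    (hLbracket : ∀ i j : ℤ, ∀ x ∈ Lg i, ∀ y ∈ Lg j, ⁅x, y⁆ ∈ Lg (i + j))
    (hWP : ∀ w ∈ W, ∀ i : ℤ, 0 < i → ∀ x ∈ Lg i, ⁅x, w⁆ = 0)
    (y : L) {v : M} (hv : v ∈ wordSpan Lg W) : ⁅y, v⁆ ∈ wordSpan Lg W := by
  have hy : y ∈ ⨆ i, Lg i := hLtop ▸ Submodule.mem_top
  refine Submodule.iSup_induction Lg (motive := fun y : L => ⁅y, v⁆ ∈ wordSpan Lg W) hy ?_ ?_ ?_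
  · intro i x hx
    show ⁅x, v⁆ ∈ wordSpan Lg W
    rcases le_or_gt i 0 with h | h
    · exact wordSpan_lie_nonpos h hx hv
    · exact wordSpan_lie_pos hLbracket hWP h hx hv
  · show ⁅(0 : L), v⁆ ∈ wordSpan Lg W
    rw [zero_lie]; exact zero_mem _
  · intro a b ha hb
    show ⁅a + b, v⁆ ∈ wordSpan Lg W
    rw [add_lie]; exact add_mem ha hb

theorem wordSpan_le {C : Submodule ℂ M} (hWC : W ⊆ (C : Set M))
    (hC : ∀ i : ℤ, i ≤ 0 → ∀ x ∈ Lg i, ∀ v ∈ C, ⁅x, v⁆ ∈ C) :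
    wordSpan Lg W ≤ C := by
  rw [wordSpan, Submodule.span_le]
  intro v hv
  induction hv with
  | base hw => exact hWC hw
  | @step d hd x hx u _ ih => exact hC d hd x hx u ih

end Statement19Aux

open Statement19Aux

/-- Let `M` be a ℤ-graded Lie module (with grading bounded above by 0) over a ℤ-graded
finite-dimensional complex Lie algebra `L`, with primary component
`M^p = {v | L_i·v = 0 for all i > 0}`.  Assume `M` is standard: the only Lie submodule
containing `M^p` is `M` itself.  Then `M` is an irreducible `L`-module if and only if
`M^p` is an irreducible `L_0`-module. -/
theorem statement19 (L M : Type*) [LieRing L] [LieAlgebra ℂ L] [FiniteDimensional ℂ L]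
    [AddCommGroup M] [Module ℂ M] [LieRingModule L M] [LieModule ℂ L M]
    (Lg : ℤ → Submodule ℂ L)
    (hLfin : {i : ℤ | Lg i ≠ ⊥}.Finite)
    (hLdecomp : DirectSum.IsInternal Lg)
    (hLbracket : ∀ i j : ℤ, ∀ x ∈ Lg i, ∀ y ∈ Lg j, ⁅x, y⁆ ∈ Lg (i + j))
    (Mg : ℤ → Submodule ℂ M)
    (hMdecomp : DirectSum.IsInternal Mg)
    (hMbound : ∀ j : ℤ, 0 < j → Mg j = ⊥)
    (hact : ∀ i j : ℤ, ∀ x ∈ Lg i, ∀ v ∈ Mg j, ⁅x, v⁆ ∈ Mg (i + j))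
    (hstd : ∀ N : LieSubmodule ℂ L M,
      {v : M | ∀ i : ℤ, 0 < i → ∀ x ∈ Lg i, ⁅x, v⁆ = 0} ⊆ (N : Set M) → N = ⊤) :
    ((∃ v : M, v ≠ 0) ∧ ∀ N : LieSubmodule ℂ L M, N = ⊥ ∨ N = ⊤) ↔
    ((∃ v ∈ {v : M | ∀ i : ℤ, 0 < i → ∀ x ∈ Lg i, ⁅x, v⁆ = 0}, v ≠ 0) ∧
      ∀ W : Submodule ℂ M,
        (W : Set M) ⊆ {v : M | ∀ i : ℤ, 0 < i → ∀ x ∈ Lg i, ⁅x, v⁆ = 0} →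
        (∀ x ∈ Lg 0, ∀ v ∈ W, ⁅x, v⁆ ∈ W) →
        W = ⊥ ∨ (W : Set M) = {v : M | ∀ i : ℤ, 0 < i → ∀ x ∈ Lg i, ⁅x, v⁆ = 0}) := by
  classical
  haveI : DirectSum.Decomposition Mg := hMdecomp.chooseDecomposition
  have hLtop : iSup Lg = ⊤ := hLdecomp.submodule_iSup_eq_top
  have hMtop : iSup Mg = ⊤ := hMdecomp.submodule_iSup_eq_top
  set π : ℤ → M → M := fun j v => ((DirectSum.decompose Mg v) j : M) with hπ
  have hπmem : ∀ (j : ℤ) (v : M), π j v ∈ Mg j := fun j v => (DirectSum.decompose Mg v j).2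
  have hπsame : ∀ (j : ℤ) (v : M), v ∈ Mg j → π j v = v := fun j v hv =>
    DirectSum.decompose_of_mem_same Mg hv
  have hπne : ∀ (j k : ℤ) (v : M), v ∈ Mg j → j ≠ k → π k v = 0 := fun j k v hv hjk => by
    simp only [hπ]
    rw [DirectSum.decompose_of_mem_ne Mg hv hjk]
  have hπbot : ∀ (j : ℤ), Mg j = ⊥ → ∀ v : M, π j v = 0 := by
    intro j hj v
    have := hπmem j v
    rw [hj] at this
    simpa using this
  have hπzero : ∀ j : ℤ, π j (0 : M) = 0 := by
    intro j
    simp only [hπ, DirectSum.decompose_zero]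
    rfl
  have hext : ∀ v : M, (∀ j : ℤ, π j v = 0) → v = 0 := by
    intro v h
    have h0 : DirectSum.decompose Mg v = 0 := by
      refine DFinsupp.ext fun j => ?_
      exact Subtype.ext (by simpa [hπ] using h j)
    have := (DirectSum.decompose Mg).injective (a₁ := v) (a₂ := 0)
    rw [DirectSum.decompose_zero] at this
    exact this h0
  have hπadd : ∀ (j : ℤ) (a b : M), π j (a + b) = π j a + π j b := by
    intro j a b
    simp only [hπ, DirectSum.decompose_add]
    rfl
  have hπsub : ∀ (j : ℤ) (a b : M), π j (a - b) = π j a - π j b := by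
    intro j a b
    have := hπadd j (a - b) b
    rw [sub_add_cancel] at this
    rw [eq_sub_of_add_eq this.symm]
  have hE : ∀ i : ℤ, ∀ x ∈ Lg i, ∀ (k : ℤ) (v : M), π (i + k) ⁅x, v⁆ = ⁅x, π k v⁆ := by
    intro i x hx k v
    have hv : v ∈ ⨆ j, Mg j := hMtop ▸ Submodule.mem_top
    refine Submodule.iSup_induction Mg
      (motive := fun v : M => π (i + k) ⁅x, v⁆ = ⁅x, π k v⁆) hv ?_ ?_ ?_
    · intro m u hu
      show π (i + k) ⁅x, u⁆ = ⁅x, π k u⁆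
      rcases eq_or_ne m k with rfl | hmk
      · rw [hπsame m u hu, hπsame (i + m) ⁅x, u⁆ (hact i m x hx u hu)]
      · rw [hπne m k u hu hmk, lie_zero,
          hπne (i + m) (i + k) ⁅x, u⁆ (hact i m x hx u hu) (by omega)]
    · show π (i + k) ⁅x, (0 : M)⁆ = ⁅x, π k (0 : M)⁆
      rw [lie_zero, hπzero, hπzero, lie_zero]
    · intro a b ha hb
      show π (i + k) ⁅x, a + b⁆ = ⁅x, π k (a + b)⁆
      rw [lie_add, hπadd, ha, hb, hπadd, lie_add]
  have hE' : ∀ i : ℤ, ∀ x ∈ Lg i, ∀ (j : ℤ) (v : M), π j ⁅x, v⁆ = ⁅x, π (j - i) v⁆ := by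
    intro i x hx j v
    have := hE i x hx (j - i) v
    rwa [show i + (j - i) = j by ring] at this
  have hPgrade : ∀ v : M, (∀ i : ℤ, 0 < i → ∀ x ∈ Lg i, ⁅x, v⁆ = 0) →
      ∀ k : ℤ, ∀ i : ℤ, 0 < i → ∀ x ∈ Lg i, ⁅x, π k v⁆ = 0 := by
    intro v hv k i hi x hx
    rw [← hE i x hx k v, hv i hi x hx]
    exact hπzero _
  constructor
  · rintro ⟨⟨v0, hv0⟩, hirr⟩
    obtain ⟨k0, hk0⟩ : ∃ k : ℤ, π k v0 ≠ 0 := by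
      by_contra h
      push_neg at h
      exact hv0 (hext v0 h)
    obtain ⟨js, hjs_ne, hjs_max⟩ : ∃ ub : ℤ, Mg ub ≠ ⊥ ∧ ∀ z : ℤ, Mg z ≠ ⊥ → z ≤ ub := by
      refine Int.exists_greatest_of_bdd ⟨0, fun z hz => ?_⟩ ⟨k0, fun h => hk0 (hπbot k0 h v0)⟩
      by_contra hz0
      exact hz (hMbound z (by omega))
    have htop0 : ∀ k : ℤ, js < k → Mg k = ⊥ := by
      intro k hk
      by_contra h
      exact absurd (hjs_max k h) (by omega)
    obtain ⟨vs, hvs_mem, hvs_ne⟩ := (Submodule.ne_bot_iff (Mg js)).mp hjs_ne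
    have hMgP : ∀ v ∈ Mg js, ∀ i : ℤ, 0 < i → ∀ x ∈ Lg i, ⁅x, v⁆ = 0 := by
      intro v hv i hi x hx
      have := hact i js x hx v hv
      rw [htop0 (i + js) (by omega)] at this
      simpa using this
    have hvsP : ∀ i : ℤ, 0 < i → ∀ x ∈ Lg i, ⁅x, vs⁆ = 0 := hMgP vs hvs_mem
    -- Step 2 : P ⊆ Mg js
    have hPj : ∀ v : M, (∀ i : ℤ, 0 < i → ∀ x ∈ Lg i, ⁅x, v⁆ = 0) → v ∈ Mg js := by
      intro p hp
      have hcomp : ∀ k : ℤ, k ≠ js → π k p = 0 := by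
        intro k hk
        rcases lt_or_gt_of_ne hk with hlt | hgt
        swap
        · exact hπbot k (htop0 k hgt) p
        by_contra hq
        have hqP : ∀ i : ℤ, 0 < i → ∀ x ∈ Lg i, ⁅x, π k p⁆ = 0 := hPgrade p hp k
        have hqMg : π k p ∈ Mg k := hπmem k p
        have hWP : ∀ w ∈ ({π k p} : Set M), ∀ i : ℤ, 0 < i → ∀ x ∈ Lg i, ⁅x, w⁆ = 0 := by
          intro w hw
          rw [Set.mem_singleton_iff] at hw
          subst hw
          exact hqP
        set N : LieSubmodule ℂ L M :=
          { wordSpan Lg ({π k p} : Set M) with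
            lie_mem := fun {y m} hm => wordSpan_lie hLtop hLbracket hWP y hm } with hN
        have hqN : π k p ∈ N := word_mem (IsWord.base rfl)
        rcases hirr N with hbot | htop
        · rw [hbot, LieSubmodule.mem_bot] at hqN
          exact hq hqN
        · have hvsN : vs ∈ N := by rw [htop]; exact LieSubmodule.mem_top vs
          set C : Submodule ℂ M := ⨆ m : {m : ℤ // m ≤ k}, Mg m.1 with hC
          have hCclosed : ∀ i : ℤ, i ≤ 0 → ∀ x ∈ Lg i, ∀ v ∈ C, ⁅x, v⁆ ∈ C := by
            intro i hi x hx v hv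
            refine Submodule.iSup_induction (fun m : {m : ℤ // m ≤ k} => Mg m.1)
              (motive := fun v : M => ⁅x, v⁆ ∈ C) hv ?_ ?_ ?_
            · rintro ⟨m, hm⟩ u hu
              show ⁅x, u⁆ ∈ C
              exact Submodule.mem_iSup_of_mem ⟨i + m, by omega⟩ (hact i m x hx u hu)
            · show ⁅x, (0 : M)⁆ ∈ C
              rw [lie_zero]; exact zero_mem _
            · intro a b ha hb
              show ⁅x, a + b⁆ ∈ C
              rw [lie_add]; exact add_mem ha hb
          have hSC : wordSpan Lg ({π k p} : Set M) ≤ C := by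
            refine wordSpan_le ?_ hCclosed
            intro w hw
            rw [Set.mem_singleton_iff] at hw
            subst hw
            exact Submodule.mem_iSup_of_mem ⟨k, le_refl k⟩ hqMg
          have hvsC : vs ∈ C := hSC hvsN
          have hdis : Disjoint (Mg js) C := by
            refine (hMdecomp.submodule_iSupIndep js).mono_right ?_
            refine iSup_le fun m => ?_
            exact le_iSup₂ (f := fun j (_ : j ≠ js) => Mg j) m.1
              (show m.1 ≠ js by have := m.2; omega)
          exact hvs_ne (Submodule.disjoint_def.mp hdis vs hvs_mem hvsC)
      have hdiff : p - π js p = 0 := by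
        refine hext _ fun j => ?_
        rw [hπsub]
        rcases eq_or_ne j js with rfl | hj
        · rw [hπsame j (π j p) (hπmem j p), sub_self]
        · rw [hcomp j hj, hπne js j (π js p) (hπmem js p) (Ne.symm hj), sub_zero]
      have : p = π js p := by
        have := sub_eq_zero.mp hdiff
        exact this
      rw [this]
      exact hπmem js p
    refine ⟨⟨vs, hvsP, hvs_ne⟩, ?_⟩
    intro W hWsub hW0
    rcases eq_or_ne W ⊥ with h | hne
    · exact Or.inl h
    right
    obtain ⟨w0, hw0W, hw0⟩ := (Submodule.ne_bot_iff W).mp hne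
    have hWMg : ∀ w ∈ W, w ∈ Mg js := fun w hw => hPj w (hWsub hw)
    have hWP : ∀ w ∈ (W : Set M), ∀ i : ℤ, 0 < i → ∀ x ∈ Lg i, ⁅x, w⁆ = 0 :=
      fun w hw => hWsub hw
    set N : LieSubmodule ℂ L M :=
      { wordSpan Lg (W : Set M) with
        lie_mem := fun {y m} hm => wordSpan_lie hLtop hLbracket hWP y hm } with hN
    rcases hirr N with hbot | htop
    · exfalso
      have : w0 ∈ N := word_mem (IsWord.base hw0W)
      rw [hbot, LieSubmodule.mem_bot] at this
      exact hw0 this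
    set Kneg : Submodule ℂ M := ⨆ m : {m : ℤ // m < js}, Mg m.1 with hKneg
    have hKclosed : ∀ i : ℤ, i ≤ 0 → ∀ x ∈ Lg i, ∀ v ∈ Kneg, ⁅x, v⁆ ∈ Kneg := by
      intro i hi x hx v hv
      refine Submodule.iSup_induction (fun m : {m : ℤ // m < js} => Mg m.1)
        (motive := fun v : M => ⁅x, v⁆ ∈ Kneg) hv ?_ ?_ ?_
      · rintro ⟨m, hm⟩ u hu
        show ⁅x, u⁆ ∈ Kneg
        exact Submodule.mem_iSup_of_mem ⟨i + m, by omega⟩ (hact i m x hx u hu)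
      · show ⁅x, (0 : M)⁆ ∈ Kneg
        rw [lie_zero]; exact zero_mem _
      · intro a b ha hb
        show ⁅x, a + b⁆ ∈ Kneg
        rw [lie_add]; exact add_mem ha hb
    have hCclosed : ∀ i : ℤ, i ≤ 0 → ∀ x ∈ Lg i, ∀ v ∈ W ⊔ Kneg, ⁅x, v⁆ ∈ W ⊔ Kneg := by
      intro i hi x hx v hv
      obtain ⟨a, ha, b, hb, rfl⟩ := Submodule.mem_sup.mp hv
      rw [lie_add]
      refine add_mem ?_ (Submodule.mem_sup_right (hKclosed i hi x hx b hb))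
      rcases eq_or_lt_of_le hi with heq | hlt
      · subst heq
        exact Submodule.mem_sup_left (hW0 x hx a ha)
      · refine Submodule.mem_sup_right
          (Submodule.mem_iSup_of_mem ⟨i + js, by omega⟩ (hact i js x hx a (hWMg a ha)))
    have hSC : wordSpan Lg (W : Set M) ≤ W ⊔ Kneg := by
      refine wordSpan_le ?_ hCclosed
      intro w hw
      exact Submodule.mem_sup_left hw
    have hdis : Disjoint (Mg js) Kneg := by
      refine (hMdecomp.submodule_iSupIndep js).mono_right ?_
      refine iSup_le fun m => ?_
      exact le_iSup₂ (f := fun j (_ : j ≠ js) => Mg j) m.1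
        (show m.1 ≠ js by have := m.2; omega)
    have hMgW : ∀ v ∈ Mg js, v ∈ W := by
      intro v hv
      have hvN : v ∈ N := by rw [htop]; exact LieSubmodule.mem_top v
      obtain ⟨a, ha, b, hb, hab⟩ := Submodule.mem_sup.mp (hSC hvN)
      have hbmem : b ∈ Mg js := by
        have hb' : b = v - a := by rw [← hab]; abel
        rw [hb']
        exact Submodule.sub_mem _ hv (hWMg a ha)
      have hb0 : b = 0 := Submodule.disjoint_def.mp hdis b hbmem hb
      rw [hb0, add_zero] at hab
      rw [← hab]
      exact ha
    refine Set.Subset.antisymm hWsub ?_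
    intro v hv
    exact hMgW v (hPj v hv)
  · rintro ⟨⟨p0, hp0P, hp0⟩, hWirr⟩
    refine ⟨⟨p0, hp0⟩, ?_⟩
    intro N
    rcases eq_or_ne N ⊥ with h | hne
    · exact Or.inl h
    right
    obtain ⟨v1, hv1N, hv1⟩ : ∃ v, v ∈ N ∧ v ≠ 0 := by
      by_contra h
      push_neg at h
      exact hne ((LieSubmodule.eq_bot_iff N).mpr fun m hm => h m hm)
    have key : ∀ n : ℕ, ∀ v : M, v ∈ N → v ≠ 0 → (∀ j : ℤ, j < -(n : ℤ) → π j v = 0) →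
        ∃ q, q ∈ N ∧ (∀ i : ℤ, 0 < i → ∀ x ∈ Lg i, ⁅x, q⁆ = 0) ∧ q ≠ 0 := by
      intro n
      induction n with
      | zero =>
        intro v hvN hv hsupp
        refine ⟨v, hvN, ?_, hv⟩
        intro i hi x hx
        refine hext _ fun j => ?_
        rw [hE' i x hx j v]
        rcases lt_or_ge (j - i) 0 with h | h
        · rw [hsupp (j - i) (by omega), lie_zero]
        · have hb := hact i (j - i) x hx _ (hπmem (j - i) v)
          rw [show i + (j - i) = j by ring, hMbound j (by omega)] at hb
          simpa using hb
      | succ n ih =>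
        intro v hvN hv hsupp
        by_cases hvP : ∀ i : ℤ, 0 < i → ∀ x ∈ Lg i, ⁅x, v⁆ = 0
        · exact ⟨v, hvN, hvP, hv⟩
        · push_neg at hvP
          obtain ⟨i, hi, x, hx, hxv⟩ := hvP
          refine ih ⁅x, v⁆ (N.lie_mem hvN) hxv ?_
          intro j hj
          rw [hE' i x hx j v, hsupp (j - i) (by omega), lie_zero]
    obtain ⟨q, hqN, hqP, hq⟩ : ∃ q, q ∈ N ∧
        (∀ i : ℤ, 0 < i → ∀ x ∈ Lg i, ⁅x, q⁆ = 0) ∧ q ≠ 0 := by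
      set s := (DirectSum.decompose Mg v1).support with hs
      have hsne : s.Nonempty := by
        by_contra h
        rw [Finset.not_nonempty_iff_eq_empty] at h
        refine hv1 (hext v1 fun j => ?_)
        have hj : j ∉ s := h ▸ Finset.notMem_empty j
        have := DFinsupp.notMem_support_iff.mp hj
        simp only [hπ]
        rw [this]
        rfl
      set m := s.min' hsne with hm
      refine key m.natAbs v1 hv1N hv1 ?_
      intro j hj
      have hjs : j ∉ s := by
        intro hmem
        have h1 := s.min'_le j hmem
        omega
      have := DFinsupp.notMem_support_iff.mp hjs
      simp only [hπ]
      rw [this]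
      rfl
    set W1 : Submodule ℂ M :=
      { carrier := {v : M | (∀ i : ℤ, 0 < i → ∀ x ∈ Lg i, ⁅x, v⁆ = 0) ∧ v ∈ N},
        add_mem' := by
          rintro a b ⟨haP, haN⟩ ⟨hbP, hbN⟩
          exact ⟨fun i hi x hx => by rw [lie_add, haP i hi x hx, hbP i hi x hx, add_zero],
            N.add_mem haN hbN⟩
        zero_mem' := ⟨fun i hi x hx => lie_zero x, N.zero_mem⟩
        smul_mem' := by
          rintro c a ⟨haP, haN⟩
          exact ⟨fun i hi x hx => by rw [lie_smul, haP i hi x hx, smul_zero],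
            N.smul_mem c haN⟩ } with hW1
    have hW1sub : (W1 : Set M) ⊆ {v : M | ∀ i : ℤ, 0 < i → ∀ x ∈ Lg i, ⁅x, v⁆ = 0} :=
      fun v hv => hv.1
    have hW1stable : ∀ x ∈ Lg 0, ∀ v ∈ W1, ⁅x, v⁆ ∈ W1 := by
      intro x hx v hv
      obtain ⟨hvP, hvN⟩ := hv
      refine ⟨?_, N.lie_mem hvN⟩
      intro i hi y hy
      rw [leibniz_lie y x v, hvP i hi y hy, lie_zero, add_zero]
      have hyx : ⁅y, x⁆ ∈ Lg i := by
        have := hLbracket i 0 y hy x hx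
        rwa [add_zero] at this
      exact hvP i hi ⁅y, x⁆ hyx
    rcases hWirr W1 hW1sub hW1stable with hbot | hset
    · exfalso
      have : q ∈ W1 := ⟨hqP, hqN⟩
      rw [hbot] at this
      exact hq (Submodule.mem_bot ℂ |>.mp this)
    · refine hstd N ?_
      intro v hv
      have : v ∈ W1 := by rw [← hset] at hv; exact hv
      exact this.2
end
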